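/- Let f : 𝕊 → X be a continuous surjection from the Sorgenfrey line onto a topological space X, and let x ∈ X be such that the fiber f⁻¹(x) is a nonempty closed discrete subset of the Sorgenfrey line. Then there exist rationals a < b and a point y ∈ [a, b) with f(y) = x such that y is the unique point of [a, b) mapped by f to x (i.e., [a, b) ∩ f⁻¹(x) = {y}). -/

import Mathlib

open Set Filter Topology Function

/-- The Sorgenfrey line: the real line as a type synonym. -/
def SorgenfreyLine : Type := ℝ

notation "𝕊" => SorgenfreyLine

noncomputable instance : LinearOrder 𝕊 := inferInstanceAs (LinearOrder ℝ)
instance : RatCast 𝕊 := inferInstanceAs (RatCast ℝ)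

/-- The topology on the Sorgenfrey line, generated by half-open intervals `[a, b)`, `a < b`. -/
instance : TopologicalSpace 𝕊 :=
  TopologicalSpace.generateFrom {s : Set 𝕊 | ∃ a b : 𝕊, a < b ∧ s = Set.Ico a b}

/-!
Every point `y` of a closed discrete set `S ⊆ 𝕊` is isolated from the right: some `[y, d)`
meets `S` only in `y`. Hence every nonempty subset of `S` that is bounded below attains its
infimum `L`: if `L ∉ S`, closedness gives some `[L, d)` missing `S`, and if `L ∈ S` is not
attained, `[L, d)` contains points of the subset other than `L`. So the least point `y` of
`S ∩ (c, ∞)` is also isolated from the left in the Euclidean sense, and rationals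
`a ∈ (c, y)`, `b ∈ (y, d)` work.
-/

namespace SorgenfreyLine

lemma exists_Ico_subset_of_isOpen {s : Set 𝕊} (hs : IsOpen s) {x : 𝕊} (hx : x ∈ s) :
    ∃ b, x < b ∧ Ico x b ⊆ s := by
  induction hs generalizing x with
  | basic u hu =>
    obtain ⟨a, b, -, rfl⟩ := hu
    exact ⟨b, hx.2, fun z hz => ⟨hx.1.trans hz.1, hz.2⟩⟩
  | univ =>
    obtain ⟨b, hxb⟩ := exists_gt (α := ℝ) x
    exact ⟨b, hxb, subset_univ _⟩
  | inter u v _ _ ihu ihv =>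
    obtain ⟨b₁, hxb₁, hu⟩ := ihu hx.1
    obtain ⟨b₂, hxb₂, hv⟩ := ihv hx.2
    exact ⟨min b₁ b₂, lt_min hxb₁ hxb₂, subset_inter
      ((Ico_subset_Ico_right (min_le_left _ _)).trans hu)
      ((Ico_subset_Ico_right (min_le_right _ _)).trans hv)⟩
  | sUnion 𝒰 _ ih =>
    obtain ⟨u, hu𝒰, hxu⟩ := hx
    obtain ⟨b, hxb, hu⟩ := ih u hu𝒰 hxu
    exact ⟨b, hxb, hu.trans (subset_sUnion_of_mem hu𝒰)⟩

lemma exists_Ico_disjoint_of_isClosed {S : Set 𝕊} (hS : IsClosed S) {x : 𝕊} (hx : x ∉ S) :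
    ∃ b, x < b ∧ Disjoint (Ico x b) S := by
  obtain ⟨b, hxb, hsub⟩ := exists_Ico_subset_of_isOpen hS.isOpen_compl hx
  exact ⟨b, hxb, subset_compl_iff_disjoint_right.mp hsub⟩

lemma exists_Ico_inter_subset_singleton {S : Set 𝕊} (hd : DiscreteTopology S) {y : 𝕊}
    (hy : y ∈ S) : ∃ b, y < b ∧ Ico y b ∩ S ⊆ {y} := by
  obtain ⟨U, hU, hUS⟩ := discreteTopology_subtype_iff'.mp hd y hy
  have hyU : y ∈ U := (hUS.symm ▸ mem_singleton y : y ∈ U ∩ S).1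
  obtain ⟨b, hyb, hsub⟩ := exists_Ico_subset_of_isOpen hU hyU
  exact ⟨b, hyb, hUS ▸ inter_subset_inter_left S hsub⟩

lemma exists_isLeast_of_subset_of_isClosed_of_discrete {S T : Set 𝕊} (hS : IsClosed S)
    (hd : DiscreteTopology S) (hTS : T ⊆ S) (hne : T.Nonempty) (hbdd : BddBelow T) :
    ∃ m, IsLeast T m := by
  obtain ⟨L, hL⟩ : ∃ L : 𝕊, IsGLB T L := Real.exists_isGLB hne hbdd
  have exists_mem_Ico : ∀ b, L < b → ∃ t ∈ T, t ∈ Ico L b := fun b hLb =>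
    let ⟨t, htT, htb⟩ := hL.exists_between hLb
    ⟨t, htT, htb.1, htb.2⟩
  have hLS : L ∈ S := by
    by_contra hLS
    obtain ⟨b, hLb, hdisj⟩ := exists_Ico_disjoint_of_isClosed hS hLS
    obtain ⟨t, htT, htI⟩ := exists_mem_Ico b hLb
    exact hdisj.notMem_of_mem_left htI (hTS htT)
  obtain ⟨b, hLb, hsub⟩ := exists_Ico_inter_subset_singleton hd hLS
  obtain ⟨t, htT, htI⟩ := exists_mem_Ico b hLb
  obtain rfl : t = L := hsub ⟨htI, hTS htT⟩
  exact ⟨t, htT, hL.1⟩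

theorem exists_rat_Ico_inter_eq_singleton {S : Set 𝕊} (hS : IsClosed S)
    (hd : DiscreteTopology S) (hne : S.Nonempty) :
    ∃ a b : ℚ, a < b ∧ ∃ y ∈ S, Ico (a : 𝕊) b ∩ S = {y} := by
  obtain ⟨y₀, hy₀⟩ := hne
  obtain ⟨c, hc⟩ := exists_lt (α := ℝ) y₀
  obtain ⟨y, ⟨hyS, hcy⟩, hy_least⟩ := exists_isLeast_of_subset_of_isClosed_of_discrete hS hd
    inter_subset_left ⟨y₀, hy₀, hc⟩ ⟨c, fun _ ht => le_of_lt ht.2⟩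
  obtain ⟨d, hyd, hright⟩ := exists_Ico_inter_subset_singleton hd hyS
  obtain ⟨a, hca, hay⟩ := exists_rat_btwn (K := ℝ) hcy
  obtain ⟨b, hyb, hbd⟩ := exists_rat_btwn (K := ℝ) hyd
  refine ⟨a, b, by exact_mod_cast hay.trans hyb, y, hyS, ?_⟩
  refine subset_antisymm ?_ (singleton_subset_iff.mpr ⟨⟨hay.le, hyb⟩, hyS⟩)
  rintro z ⟨⟨haz, hzb⟩, hzS⟩
  have hyz : y ≤ z := hy_least ⟨hzS, (hca.trans_le haz : c < z)⟩
  exact hright ⟨⟨hyz, (hzb.trans hbd : z < d)⟩, hzS⟩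

end SorgenfreyLine

theorem stmt10_general {X : Type} (f : 𝕊 → X) (x : X)
    (hne : (f ⁻¹' {x}).Nonempty) (hcl : IsClosed (f ⁻¹' {x}))
    (hdisc : DiscreteTopology (f ⁻¹' {x} : Set 𝕊)) :
    ∃ a b : ℚ, a < b ∧ ∃ y : 𝕊, f y = x ∧
      Set.Ico (a : 𝕊) (b : 𝕊) ∩ f ⁻¹' {x} = {y} :=
  SorgenfreyLine.exists_rat_Ico_inter_eq_singleton hcl hdisc hne

/-- If `f` is a continuous surjection from the Sorgenfrey line onto `X` and the fiber over
`x` is nonempty, closed and discrete, then there are rationals `a < b` and a point `y` such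
that `[a, b) ∩ f ⁻¹' {x} = {y}`. -/
theorem stmt10 {X : Type} [TopologicalSpace X] (f : 𝕊 → X)
    (hf : Continuous f) (hsurj : Surjective f) (x : X)
    (hne : (f ⁻¹' {x}).Nonempty) (hcl : IsClosed (f ⁻¹' {x}))
    (hdisc : DiscreteTopology (f ⁻¹' {x} : Set 𝕊)) :
    ∃ a b : ℚ, a < b ∧ ∃ y : 𝕊, f y = x ∧
      Set.Ico (a : 𝕊) (b : 𝕊) ∩ f ⁻¹' {x} = {y} :=
  stmt10_general f x hne hcl hdisc
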